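/- The optimal value of the LP relaxation of Q_n (obtained by replacing the integrality constraints (x_i, y_i) ∈ P ∩ ℤ² with (x_i, y_i) ∈ P) is 7.9n, and the unique optimal solution is (x_i, y_i) = (0.9, 0.5) for all i together with z = 16.7. -/
import Mathlib


/-- The polytope `P = {(x,y) ∈ [0,1]² | -7x + y ≤ 0.3, 5x + 8y ≤ 8.5, 3x + 2y ≤ 3.7}`. -/
def P : Set (ℝ × ℝ) :=
  {p | 0 ≤ p.1 ∧ p.1 ≤ 1 ∧ 0 ≤ p.2 ∧ p.2 ≤ 1 ∧
    -7 * p.1 + p.2 ≤ 0.3 ∧ 5 * p.1 + 8 * p.2 ≤ 8.5 ∧ 3 * p.1 + 2 * p.2 ≤ 3.7}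

/-- Feasibility for the LP relaxation of `Q_n` (integrality dropped): `(xᵢ, yᵢ) ∈ P` for all `i`,
`13xᵢ + 10yᵢ ≤ z` for all `i`, and `z ≤ 16.7`. -/
def QnLPFeas (n : ℕ) (xy : Fin n → ℝ × ℝ) (z : ℝ) : Prop :=
  (∀ i, xy i ∈ P ∧ 13 * (xy i).1 + 10 * (xy i).2 ≤ z) ∧ z ≤ 16.7

/-- The objective of `Q_n`: `6 ∑ xᵢ + 5 ∑ yᵢ`. -/
noncomputable def QnObj (n : ℕ) (xy : Fin n → ℝ × ℝ) : ℝ :=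
  6 * ∑ i, (xy i).1 + 5 * ∑ i, (xy i).2

lemma key_le (p : ℝ × ℝ) (hp : p ∈ P) : 6 * p.1 + 5 * p.2 ≤ 7.9 := by
  obtain ⟨_, _, _, _, _, h5, h6⟩ := hp
  nlinarith

lemma key_eq (p : ℝ × ℝ) (hp : p ∈ P) (he : 6 * p.1 + 5 * p.2 = 7.9) :
    p = ((0.9 : ℝ), (0.5 : ℝ)) := by
  obtain ⟨_, _, _, _, _, h5, h6⟩ := hp
  have h1 : p.1 = 0.9 := by nlinarith
  have h2 : p.2 = 0.5 := by nlinarith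
  exact Prod.ext h1 h2

/-- The optimal value of the LP relaxation of `Q_n` is `7.9n`, and its unique optimal
solution is `(xᵢ, yᵢ) = (0.9, 0.5)` for all `i` together with `z = 16.7`. -/
theorem Qn_LP_relaxation_optimal (n : ℕ) (hn : 1 ≤ n) :
    QnLPFeas n (fun _ => ((0.9 : ℝ), (0.5 : ℝ))) 16.7 ∧
    QnObj n (fun _ => ((0.9 : ℝ), (0.5 : ℝ))) = 7.9 * n ∧
    (∀ (xy : Fin n → ℝ × ℝ) (z : ℝ), QnLPFeas n xy z → QnObj n xy ≤ 7.9 * n) ∧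
    (∀ (xy : Fin n → ℝ × ℝ) (z : ℝ), QnLPFeas n xy z → QnObj n xy = 7.9 * n →
      xy = (fun _ => ((0.9 : ℝ), (0.5 : ℝ))) ∧ z = 16.7) := by
  have hobj : ∀ (xy : Fin n → ℝ × ℝ),
      QnObj n xy = ∑ i, (6 * (xy i).1 + 5 * (xy i).2) := by
    intro xy
    simp [QnObj, Finset.sum_add_distrib, Finset.mul_sum]
  refine ⟨⟨fun i => ⟨⟨by norm_num, by norm_num, by norm_num, by norm_num,
    by norm_num, by norm_num, by norm_num⟩, by norm_num⟩, by norm_num⟩, ?_, ?_, ?_⟩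
  · rw [hobj]; simp; ring
  · intro xy z ⟨hfeas, _⟩
    rw [hobj]
    calc ∑ i, (6 * (xy i).1 + 5 * (xy i).2) ≤ ∑ _i : Fin n, (7.9 : ℝ) :=
          Finset.sum_le_sum fun i _ => key_le _ (hfeas i).1
      _ = 7.9 * n := by simp [mul_comm]
  · intro xy z ⟨hfeas, hz⟩ heq
    have hsum : ∑ i, (6 * (xy i).1 + 5 * (xy i).2) = ∑ _i : Fin n, (7.9 : ℝ) := by
      rw [← hobj, heq]; simp [mul_comm]
    have hall : ∀ i ∈ Finset.univ, 6 * (xy i).1 + 5 * (xy i).2 = 7.9 :=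
      (Finset.sum_eq_sum_iff_of_le (fun i _ => key_le _ (hfeas i).1)).mp hsum
    have hxy : ∀ i, xy i = ((0.9 : ℝ), (0.5 : ℝ)) := fun i =>
      key_eq _ (hfeas i).1 (hall i (Finset.mem_univ i))
    refine ⟨funext hxy, ?_⟩
    obtain ⟨i⟩ : Nonempty (Fin n) := ⟨⟨0, hn⟩⟩
    have := (hfeas i).2
    rw [hxy i] at this
    norm_num at this
    linarith
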